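/- Let X be a sup-sober T₀-space. Then X is Irr⁺-continuous (i.e., Irr-continuous with ↟x open for every x) if and only if X is a C-space. -/
import Mathlib


universe u v w

open Set

/-- A preordered index type is a (nonempty) directed index set for nets. -/
def IsDirIdx (I : Type v) [Preorder I] : Prop :=
  Nonempty I ∧ ∀ i j : I, ∃ k, i ≤ k ∧ j ≤ k

/-- Convergence of a net with respect to a topology `t` on `X`. -/
def NetConv {X : Type u} (t : TopologicalSpace X) {I : Type v} [Preorder I]
    (net : I → X) (x : X) : Prop :=
  ∀ U : Set X, t.IsOpen U → x ∈ U → ∃ k, ∀ i, k ≤ i → net i ∈ U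

section
variable {X : Type u} [TopologicalSpace X]

/-- The specialisation order: `x ≤ y` iff `x ∈ cl {y}`. -/
def sLE (x y : X) : Prop := x ∈ closure ({y} : Set X)

/-- `b` is an upper bound of `A` in the specialisation order. -/
def IsUB (A : Set X) (b : X) : Prop := ∀ a ∈ A, sLE a b

/-- `s` is the supremum (least upper bound) of `A` in the specialisation order. -/
def IsSupSpec (A : Set X) (s : X) : Prop := IsUB A s ∧ ∀ b, IsUB A b → sLE s b

/-- The upper set `↑x` in the specialisation order. -/
def upS (x : X) : Set X := {u | sLE x u}

/-- The lower set `↓A` in the specialisation order. -/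
def downS (A : Set X) : Set X := {u | ∃ a ∈ A, sLE u a}

/-- The Irr-way-below relation: `x ≪_Irr y` iff every irreducible set `E`
whose supremum exists and dominates `y` meets `↑x`. -/
def wbIrr (x y : X) : Prop :=
  ∀ E : Set X, IsIrreducible E → ∀ s : X, IsSupSpec E s → sLE y s → (E ∩ upS x).Nonempty

/-- `↡x = {u | u ≪_Irr x}`. -/
def ddIrr (x : X) : Set X := {u | wbIrr u x}

/-- `↟x = {u | x ≪_Irr u}`. -/
def uuIrr (x : X) : Set X := {u | wbIrr x u}

/-- A directed subset (w.r.t. the specialisation order): nonempty and every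
pair of elements has an upper bound in the set. -/
def DirectedSub (D : Set X) : Prop :=
  D.Nonempty ∧ ∀ a ∈ D, ∀ b ∈ D, ∃ c ∈ D, sLE a c ∧ sLE b c

/-- `e` is an eventual lower bound of the net `net`. -/
def EvLB {I : Type v} [Preorder I] (net : I → X) (e : X) : Prop :=
  ∃ k, ∀ i, k ≤ i → sLE e (net i)

/-- Irr-convergence: the net `net` Irr-converges to `y` iff there is an
irreducible set `E` with a supremum `≥ y` consisting of eventual lower
bounds of the net. -/
def IrrConv {I : Type v} [Preorder I] (net : I → X) (y : X) : Prop :=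
  ∃ E : Set X, IsIrreducible E ∧ (∃ s, IsSupSpec E s ∧ sLE y s) ∧ ∀ e ∈ E, EvLB net e

end

/-- Sup-sobriety: every closed irreducible set having a supremum is the
closure of the singleton of its supremum. -/
def SupSober (X : Type u) [TopologicalSpace X] : Prop :=
  ∀ F : Set X, IsClosed F → IsIrreducible F → ∀ s : X, IsSupSpec F s → F = closure {s}

/-- `U` is open in the irreducibly-derived topology `τ_SI`. -/
def SIOpen {X : Type u} [TopologicalSpace X] (U : Set X) : Prop :=
  IsOpen U ∧ ∀ E : Set X, IsIrreducible E → ∀ s : X, IsSupSpec E s → s ∈ U →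
    (E ∩ U).Nonempty

/-- Interior with respect to the irreducibly-derived topology. -/
def SIint {X : Type u} [TopologicalSpace X] (A : Set X) : Set X :=
  ⋃₀ {U : Set X | SIOpen U ∧ U ⊆ A}

/-- Irr-continuity: every `↡x` is irreducible with supremum `x`. -/
def IrrCont (X : Type u) [TopologicalSpace X] : Prop :=
  ∀ x : X, IsIrreducible (ddIrr x) ∧ IsSupSpec (ddIrr x) x

/-- SI⁻-continuity: every `↡x` contains a directed subset with supremum `x`. -/
def SImCont (X : Type u) [TopologicalSpace X] : Prop :=
  ∀ x : X, ∃ D : Set X, D ⊆ ddIrr x ∧ DirectedSub D ∧ IsSupSpec D x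

/-- The `*`-property: for every irreducible `F` with a supremum there is a
directed subset of `↓F` with the same supremum. -/
def StarProp (X : Type u) [TopologicalSpace X] : Prop :=
  ∀ F : Set X, IsIrreducible F → ∀ s : X, IsSupSpec F s →
    ∃ D : Set X, D ⊆ downS F ∧ DirectedSub D ∧ IsSupSpec D s

/-- The `⊕`-property: every `↟x` is open. -/
def OplusProp (X : Type u) [TopologicalSpace X] : Prop :=
  ∀ x : X, IsOpen (uuIrr x)

/-- C-space: for every open `U` and `x ∈ U` there is `y ∈ U` with
`x ∈ int (↑y)`. -/
def CSpace (X : Type u) [TopologicalSpace X] : Prop :=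
  ∀ U : Set X, IsOpen U → ∀ x ∈ U, ∃ y ∈ U, x ∈ interior (upS y)

/-- The Irr-convergence class is topological: some topology induces it. -/
def IrrTopological (X : Type u) [TopologicalSpace X] : Prop :=
  ∃ t : TopologicalSpace X, ∀ (I : Type u) [Preorder I], IsDirIdx I →
    ∀ (net : I → X) (y : X), IrrConv net y ↔ NetConv t net y

/-- The family `τ_𝓘` of sets induced by the Irr-convergence class. -/
def tauI (X : Type u) [TopologicalSpace X] : Set (Set X) :=
  {U | ∀ (I : Type u) [Preorder I], IsDirIdx I → ∀ (net : I → X) (y : X),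
      IrrConv net y → y ∈ U → ∃ k, ∀ i, k ≤ i → net i ∈ U}

/-- Kelley's (Iterated limits) axiom for the Irr-convergence class. -/
def IterLimAxiom (X : Type u) [TopologicalSpace X] : Prop :=
  ∀ (I : Type u) [Preorder I], IsDirIdx I →
    ∀ (J : I → Type u) [∀ i, Preorder (J i)], (∀ i, IsDirIdx (J i)) →
      ∀ (xi : I → X) (xx : ∀ i, J i → X) (x : X),
        IrrConv xi x → (∀ i, IrrConv (xx i) (xi i)) →
        IrrConv (fun p : I × (∀ i, J i) => xx p.1 (p.2 p.1)) x
section Aux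
variable {X : Type u} [TopologicalSpace X]

lemma sLE_iff' {x y : X} : sLE x y ↔ ∀ U : Set X, IsOpen U → x ∈ U → y ∈ U := by
  constructor
  · intro h U hU hx
    rcases mem_closure_iff.mp h U hU hx with ⟨z, hzU, hz⟩
    rcases hz with rfl; exact hzU
  · intro h
    exact mem_closure_iff.mpr fun U hU hx => ⟨y, h U hU hx, rfl⟩

lemma sLE_refl' (x : X) : sLE x x := subset_closure rfl

lemma sLE_trans' {x y z : X} (h1 : sLE x y) (h2 : sLE y z) : sLE x z := by
  rw [sLE_iff'] at *
  exact fun U hU hx => h2 U hU (h1 U hU hx)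

lemma open_upper' {U : Set X} (hU : IsOpen U) {x y : X} (hx : x ∈ U) (h : sLE x y) :
    y ∈ U := sLE_iff'.mp h U hU hx

lemma supSpec_singleton (u : X) : IsSupSpec ({u} : Set X) u :=
  ⟨fun a ha => ha ▸ sLE_refl' u, fun b hb => hb u rfl⟩

lemma supSpec_closure {E : Set X} {s : X} (h : IsSupSpec E s) :
    IsSupSpec (closure E) s := by
  constructor
  · intro a ha
    have hE : E ⊆ closure ({s} : Set X) := fun e he => h.1 e he
    exact (closure_minimal hE isClosed_closure) ha
  · intro b hb
    exact h.2 b fun a ha => hb a (subset_closure ha)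

/-- From `wbIrr x y` we get `sLE x y`, using the singleton `{y}`. -/
lemma wbIrr_sLE {x y : X} (h : wbIrr x y) : sLE x y := by
  rcases h {y} (isIrreducible_singleton) y (supSpec_singleton y) (sLE_refl' y) with
    ⟨z, hz, hz'⟩
  rcases hz with rfl; exact hz'

/-- Sup-sobriety: membership in `int (↑x)` implies `x ≪_Irr ·`. -/
lemma wbIrr_of_mem_int (hs : SupSober X) {x y : X} (hy : y ∈ interior (upS x)) :
    wbIrr x y := by
  intro E hE s hsup hys
  have hcl : closure E = closure ({s} : Set X) :=
    hs (closure E) isClosed_closure hE.closure s (supSpec_closure hsup)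
  have hsE : s ∈ closure E := hcl ▸ sLE_refl' s
  have hsI : s ∈ interior (upS x) := open_upper' isOpen_interior hy hys
  rcases mem_closure_iff.mp hsE _ isOpen_interior hsI with ⟨z, hzI, hzE⟩
  exact ⟨z, hzE, interior_subset hzI⟩

/-- In a C-space, the set `{z | y ∈ int (↑z)}` is irreducible with sup `y`. -/
lemma cSpace_baseSet (hc : CSpace X) (y : X) :
    IsIrreducible {z : X | y ∈ interior (upS z)} ∧
      IsSupSpec {z : X | y ∈ interior (upS z)} y := by
  set E : Set X := {z : X | y ∈ interior (upS z)} with hEdef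
  have hne : E.Nonempty := by
    rcases hc univ isOpen_univ y (mem_univ y) with ⟨z, _, hz⟩
    exact ⟨z, hz⟩
  have hub : IsUB E y := by
    intro z hz
    exact show y ∈ upS z from interior_subset hz
  refine ⟨⟨hne, ?_⟩, hub, ?_⟩
  · intro u v hu hv ⟨z1, hz1E, hz1u⟩ ⟨z2, hz2E, hz2v⟩
    have hyV : y ∈ interior (upS z1) ∩ interior (upS z2) := ⟨hz1E, hz2E⟩
    rcases hc _ (isOpen_interior.inter isOpen_interior) y hyV with ⟨z, hzV, hz⟩
    refine ⟨z, hz, ?_, ?_⟩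
    · exact open_upper' hu hz1u (show z ∈ upS z1 from interior_subset hzV.1)
    · exact open_upper' hv hz2v (show z ∈ upS z2 from interior_subset hzV.2)
  · intro b hb
    rw [sLE_iff']
    intro U hU hyU
    rcases hc U hU y hyU with ⟨z, hzU, hz⟩
    have : sLE z b := hb z hz
    exact open_upper' hU hzU this

/-- In a C-space, `x ≪_Irr y` implies `y ∈ int (↑x)`. -/
lemma mem_int_of_wbIrr (hc : CSpace X) {x y : X} (h : wbIrr x y) :
    y ∈ interior (upS x) := by
  obtain ⟨hirr, hsup⟩ := cSpace_baseSet hc y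
  rcases h _ hirr y hsup (sLE_refl' y) with ⟨z, hzE, hzx⟩
  have hmono : upS z ⊆ upS x := fun u hu => sLE_trans' hzx hu
  exact interior_mono hmono hzE

end Aux

/-- for a sup-sober space, Irr⁺-continuity is equivalent to
being a C-space. -/
theorem irrContPlus_iff_cSpace {X : Type u} [TopologicalSpace X] [T0Space X]
    (hs : SupSober X) :
    (IrrCont X ∧ OplusProp X) ↔ CSpace X := by
  constructor
  · rintro ⟨hic, hop⟩ U hU x hxU
    obtain ⟨hirr, hsup⟩ := hic x
    -- `↡x` meets `U`
    have hmeet : (ddIrr x ∩ U).Nonempty := by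
      by_contra hcon
      have hsub : ddIrr x ⊆ Uᶜ := by
        intro z hz
        intro hzU
        exact hcon ⟨z, hz, hzU⟩
      have hcl : closure (ddIrr x) = closure ({x} : Set X) :=
        hs (closure (ddIrr x)) isClosed_closure hirr.closure x (supSpec_closure hsup)
      have hxcl : x ∈ closure (ddIrr x) := hcl ▸ sLE_refl' x
      have : x ∈ Uᶜ := closure_minimal hsub hU.isClosed_compl hxcl
      exact this hxU
    rcases hmeet with ⟨y, hyd, hyU⟩
    refine ⟨y, hyU, ?_⟩
    have hopen : IsOpen (uuIrr y) := hop y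
    have hsubset : uuIrr y ⊆ upS y := fun u hu => wbIrr_sLE hu
    exact interior_maximal hsubset hopen hyd
  · intro hc
    have key : ∀ x : X, uuIrr x = interior (upS x) := by
      intro x
      ext y
      exact ⟨fun h => mem_int_of_wbIrr hc h, fun h => wbIrr_of_mem_int hs h⟩
    have key2 : ∀ x : X, ddIrr x = {z : X | x ∈ interior (upS z)} := by
      intro x
      ext z
      exact ⟨fun h => mem_int_of_wbIrr hc h, fun h => wbIrr_of_mem_int hs h⟩
    refine ⟨fun x => ?_, fun x => ?_⟩
    · rw [key2 x]
      exact cSpace_baseSet hc x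
    · rw [key x]
      exact isOpen_interior
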